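/- arXiv:2303.02732 — 3 statements merged into one kernel-verified Lean document; each statement's English description precedes it below -/
import Mathlib

section
/- Let $(x_t)_{t\ge0}$ be a sequence of nonnegative reals with $x_0 = 0$ satisfying $x_t \le (1-\alpha n\lambda_0)x_{t-1} + \alpha\eta + \alpha n\gamma x_{t-1}^2$ for all $t\ge1$, where $\alpha, n, \lambda_0, \gamma, \eta > 0$, $\gamma < 2\lambda_0$, $\alpha n\lambda_0 \le 1$, and $n \ge 4\eta/(2\lambda_0-\gamma)$. Then $x_t \le \frac{2\eta}{(2\lambda_0-\gamma)n}$ for all $t\ge0$. -/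
/-!
The right-hand side of the recursion is `f (x (t-1))` for
`f y = (1 - αnλ₀) y + αη + αnγ y²`, which is monotone on `[0, ∞)` because `αnλ₀ ≤ 1`.
Hence `[0, B]` is invariant as soon as `f B ≤ B`, and the lower bound on `n` gives exactly this
for `B = 2η / ((2λ₀ - γ) n)`.
-/

open Set

theorem le_of_le_map_of_monotoneOn {β : Type*} [Preorder β] {f : β → β} {s : Set β}
    {x : ℕ → β} {B : β} (hf : MonotoneOn f s) (hB : B ∈ s) (hfB : f B ≤ B)
    (hxs : ∀ t, x t ∈ s) (hx0 : x 0 ≤ B) (hrec : ∀ t, x (t + 1) ≤ f (x t)) :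
    ∀ t, x t ≤ B
  | 0 => hx0
  | t + 1 => (hrec t).trans <|
      (hf (hxs t) hB (le_of_le_map_of_monotoneOn hf hB hfB hxs hx0 hrec t)).trans hfB

theorem monotoneOn_linear_add_const_add_sq {p q r : ℝ} (hp : 0 ≤ p) (hr : 0 ≤ r) :
    MonotoneOn (fun y => p * y + q + r * y ^ 2) (Ici 0) := by
  intro y hy z _ hyz
  have hsq : y ^ 2 ≤ z ^ 2 := pow_le_pow_left₀ hy hyz 2
  dsimp only
  gcongr

/-- `B = 2η / ((2λ₀ - γ) n)` satisfies `nλ₀ B = η + nγB/2`, so the step inequality at `B` reduces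
to `γ B² ≤ γ B / 2`, i.e. to `B ≤ 1/2`, which is the hypothesis on `n`. -/
theorem map_bound_le_bound {α n lam0 γ η : ℝ} (hα : 0 ≤ α) (hn : 0 < n) (hγ : 0 ≤ γ) (hη : 0 ≤ η)
    (hd : 0 < 2 * lam0 - γ) (hN : 4 * η ≤ (2 * lam0 - γ) * n) :
    (1 - α * n * lam0) * (2 * η / ((2 * lam0 - γ) * n)) + α * η
        + α * n * γ * (2 * η / ((2 * lam0 - γ) * n)) ^ 2
      ≤ 2 * η / ((2 * lam0 - γ) * n) := by
  set B := 2 * η / ((2 * lam0 - γ) * n)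
  have hdn : 0 < (2 * lam0 - γ) * n := by positivity
  have hBeq : B * ((2 * lam0 - γ) * n) = 2 * η := div_mul_cancel₀ _ hdn.ne'
  have hBhalf : B ≤ 1 / 2 := by
    rw [div_le_iff₀ hdn]
    linarith
  have hBnonneg : 0 ≤ B := by positivity
  have hgap : α * n * γ * B * (B - 1 / 2) ≤ 0 :=
    mul_nonpos_of_nonneg_of_nonpos (by positivity) (by linarith)
  nlinarith

theorem stmt0_general (x : ℕ → ℝ) (α n lam0 γ η : ℝ)
    (hα : 0 < α) (hn : 0 < n) (hγ : 0 < γ) (hη : 0 < η)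
    (hγlam : γ < 2 * lam0) (hstep : α * n * lam0 ≤ 1)
    (hN : n ≥ 4 * η / (2 * lam0 - γ))
    (hx0 : x 0 = 0) (hnn : ∀ t, 0 ≤ x t)
    (hrec : ∀ t ≥ 1, x t ≤ (1 - α * n * lam0) * x (t - 1) + α * η
        + α * n * γ * (x (t - 1)) ^ 2) :
    ∀ t, x t ≤ 2 * η / ((2 * lam0 - γ) * n) := by
  have hd : 0 < 2 * lam0 - γ := by linarith
  have hN' : 4 * η ≤ (2 * lam0 - γ) * n := by
    rw [ge_iff_le, div_le_iff₀ hd] at hN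
    linarith
  have hB : (0 : ℝ) ≤ 2 * η / ((2 * lam0 - γ) * n) := by positivity
  refine le_of_le_map_of_monotoneOn
    (monotoneOn_linear_add_const_add_sq (sub_nonneg.mpr hstep) (by positivity))
    hB (map_bound_le_bound hα.le hn hγ.le hη.le hd hN') hnn (hx0 ▸ hB) fun t => ?_
  simpa using hrec (t + 1) (by omega)

/-- Scalar recursion underlying Step 1 of the GD approximation-error theorem. -/
theorem stmt0 (x : ℕ → ℝ) (α n lam0 γ η : ℝ)
    (hα : 0 < α) (hn : 0 < n) (hlam : 0 < lam0) (hγ : 0 < γ) (hη : 0 < η)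
    (hγlam : γ < 2 * lam0) (hstep : α * n * lam0 ≤ 1)
    (hN : n ≥ 4 * η / (2 * lam0 - γ))
    (hx0 : x 0 = 0) (hnn : ∀ t, 0 ≤ x t)
    (hrec : ∀ t ≥ 1, x t ≤ (1 - α * n * lam0) * x (t - 1) + α * η
        + α * n * γ * (x (t - 1)) ^ 2) :
    ∀ t, x t ≤ 2 * η / ((2 * lam0 - γ) * n) :=
  stmt0_general x α n lam0 γ η hα hn hγ hη hγlam hstep hN hx0 hnn hrec
end

section
/- Let $F : \mathbb{R}^p \to \mathbb{R}$ be twice continuously differentiable and suppose all eigenvalues of $\nabla^2 F(\theta)$ lie in $[m, L]$ for all $\theta$, with $0 < m \le L$. Fix $0 < \alpha \le 1/L$. If sequences $(\widehat\theta^{(t)})$, $(\widehat\theta^{(t)}_-)$, $(\widetilde\theta^{(t)})$ in $\mathbb{R}^p$ satisfy $\widetilde\theta^{(t)} = \widetilde\theta^{(t-1)} - \alpha\big(\nabla F(\widehat\theta^{(t-1)}) + \nabla^2 F(\widehat\theta^{(t-1)})[\widetilde\theta^{(t-1)} - \widehat\theta^{(t-1)}]\big)$ and $\widehat\theta^{(t)}_-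 = \widehat\theta^{(t-1)}_- - \alpha\nabla F(\widehat\theta^{(t-1)}_-)$, then for every $t\ge1$ there exists $\theta'$ on the segment between $\widehat\theta^{(t-1)}$ and $\widehat\theta^{(t-1)}_-$ such that $\|\widehat\theta^{(t)}_- - \widetilde\theta^{(t)}\|_2 \le (1-\alpha m)\|\widehat\theta^{(t-1)}_- - \widetilde\theta^{(t-1)}\|_2 + \alpha\|(\nabla^2 F(\theta') - \nabla^2 F(\widehat\theta^{(t-1)}))[\widehat\theta^{(t-1)}_- - \widehat\theta^{(t-1)}]\|_2$. -/
/-!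
Write `a`, `b`, `c` for the previous full-data iterate, leave-one-out iterate and IACV iterate,
and `H = ∇²F(a)`. Subtracting the two updates gives
`b⁺ - c⁺ = (I - αH)(b - c) - α (∇F(b) - ∇F(a) - H(b - a))`.
Since `H` is symmetric with spectrum in `[m, L]` and `αL ≤ 1`, the operator `I - αH` has
spectrum in `[0, 1 - αm]`, so its norm is at most `1 - αm`. The Taylor remainder is handled by
the mean value theorem applied to `x ↦ ⟪u, ∇F(x) - Hx⟫`, with `u` the remainder itself.
-/

open scoped RealInnerProductSpace

section

variable {E : Type*} [NormedAddCommGroup E] [InnerProductSpace ℝ E]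

theorem ContinuousLinearMap.norm_apply_le_of_abs_inner_le {T : E →L[ℝ] E}
    (hT : (T : E →ₗ[ℝ] E).IsSymmetric) {c : ℝ} (h : ∀ v, |⟪T v, v⟫| ≤ c * ‖v‖ ^ 2) (w : E) :
    ‖T w‖ ≤ c * ‖w‖ := by
  rcases eq_or_ne w 0 with rfl | hw
  · simp
  have hc : 0 ≤ c := nonneg_of_mul_nonneg_left ((abs_nonneg _).trans (h w)) (by positivity)
  have hnorm : ‖T‖ ≤ c := by
    rw [T.norm_eq_iSup_rayleighQuotient hT]
    refine ciSup_le fun v => ?_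
    rw [ContinuousLinearMap.rayleighQuotient, ContinuousLinearMap.reApplyInnerSelf_apply,
      RCLike.re_to_real, abs_div, abs_sq]
    exact div_le_of_le_mul₀ (by positivity) hc (h v)
  exact (T.le_opNorm w).trans (by gcongr)

theorem ContinuousLinearMap.norm_sub_smul_apply_le {A : E →L[ℝ] E}
    (hA : (A : E →ₗ[ℝ] E).IsSymmetric) {m L α : ℝ}
    (hmL : ∀ v, m * ‖v‖ ^ 2 ≤ ⟪v, A v⟫ ∧ ⟪v, A v⟫ ≤ L * ‖v‖ ^ 2)
    (hα : 0 ≤ α) (hαL : α * L ≤ 1) (w : E) :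
    ‖w - α • A w‖ ≤ (1 - α * m) * ‖w‖ := by
  let S := ContinuousLinearMap.id ℝ E - α • A
  have hS : (S : E →ₗ[ℝ] E).IsSymmetric := fun v w => by
    have hAvw : ⟪A v, w⟫ = ⟪v, A w⟫ := hA v w
    change ⟪v - α • A v, w⟫ = ⟪v, w - α • A w⟫
    rw [inner_sub_left, inner_sub_right, real_inner_smul_left, real_inner_smul_right, hAvw]
  refine S.norm_apply_le_of_abs_inner_le hS (fun v => ?_) w
  have hSv : ⟪S v, v⟫ = ‖v‖ ^ 2 - α * ⟪v, A v⟫ := by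
    change ⟪v - α • A v, v⟫ = _
    rw [inner_sub_left, real_inner_self_eq_norm_sq, real_inner_smul_left, real_inner_comm v]
  obtain ⟨hm, hL⟩ := hmL v
  rw [hSv, abs_le]
  constructor <;>
    nlinarith [sq_nonneg ‖v‖, mul_le_mul_of_nonneg_left hm hα, mul_le_mul_of_nonneg_left hL hα]

end

section

variable {E : Type*} [NormedAddCommGroup E] [InnerProductSpace ℝ E] [CompleteSpace E]
  {F : E → ℝ}

theorem ContDiff.differentiable_gradient (hF : ContDiff ℝ 2 F) : Differentiable ℝ (gradient F) :=
  ((InnerProductSpace.toDual ℝ E).symm.contDiff.comp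
    (hF.fderiv_right (m := 1) (by norm_num))).differentiable one_ne_zero

theorem ContDiff.inner_fderiv_gradient_apply (hF : ContDiff ℝ 2 F) (x v w : E) :
    ⟪fderiv ℝ (gradient F) x v, w⟫ = fderiv ℝ (fderiv ℝ F) x v w := by
  have hd : DifferentiableAt ℝ (fderiv ℝ F) x :=
    (hF.fderiv_right (m := 1) (by norm_num)).differentiable one_ne_zero x
  have : fderiv ℝ (gradient F) x =
      (InnerProductSpace.toDual ℝ E).symm.toContinuousLinearEquiv.toContinuousLinearMap.comp
        (fderiv ℝ (fderiv ℝ F) x) :=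
    ((InnerProductSpace.toDual ℝ E).symm.toContinuousLinearEquiv.hasFDerivAt.comp x
      hd.hasFDerivAt).fderiv
  rw [this]
  exact InnerProductSpace.toDual_symm_apply

theorem ContDiff.isSymmetric_fderiv_gradient (hF : ContDiff ℝ 2 F) (x : E) :
    (fderiv ℝ (gradient F) x : E →ₗ[ℝ] E).IsSymmetric := fun v w => by
  change ⟪fderiv ℝ (gradient F) x v, w⟫ = ⟪v, fderiv ℝ (gradient F) x w⟫
  rw [← real_inner_comm v, hF.inner_fderiv_gradient_apply, hF.inner_fderiv_gradient_apply]
  exact (hF.contDiffAt.isSymmSndFDerivAt (by simp)) v w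

end

theorem exists_mem_segment_norm_sub_sub_fderiv_le {E G : Type*} [NormedAddCommGroup E]
    [NormedSpace ℝ E] [NormedAddCommGroup G] [InnerProductSpace ℝ G] {f : E → G}
    {f' : E → E →L[ℝ] G} {a b : E} (hf : ∀ x ∈ segment ℝ a b, HasFDerivAt f (f' x) x) :
    ∃ z ∈ segment ℝ a b, ‖f b - f a - f' a (b - a)‖ ≤ ‖(f' z - f' a) (b - a)‖ := by
  set u := f b - f a - f' a (b - a)
  obtain ⟨z, hz, hmvt⟩ := domain_mvt (f := fun x => ⟪u, f x - f' a x⟫)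
    (fun x hx => (((innerSL ℝ u).hasFDerivAt.comp x ((hf x hx).sub (f' a).hasFDerivAt)))
      |>.hasFDerivWithinAt) (convex_segment a b) (left_mem_segment ℝ a b) (right_mem_segment ℝ a b)
  refine ⟨z, hz, ?_⟩
  have hdiff : (f b - f' a b) - (f a - f' a a) = u := by
    simp only [u, map_sub]
    abel
  rw [← inner_sub_right, hdiff] at hmvt
  have hu : ‖u‖ * ‖u‖ ≤ ‖u‖ * ‖(f' z - f' a) (b - a)‖ := by
    rw [← real_inner_self_eq_norm_mul_norm, hmvt]
    exact real_inner_le_norm _ _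
  rcases (norm_nonneg u).eq_or_lt with hu0 | hupos
  · exact hu0 ▸ norm_nonneg _
  · exact le_of_mul_le_mul_left hu hupos

theorem stmt2_general {p : ℕ} (F : EuclideanSpace ℝ (Fin p) → ℝ) (m L α : ℝ)
    (hF : ContDiff ℝ 2 F)
    (hα : 0 < α) (hαL : α ≤ 1 / L)
    (hH : ∀ θ v, m * ‖v‖ ^ 2 ≤ ⟪v, fderiv ℝ (gradient F) θ v⟫ ∧
          ⟪v, fderiv ℝ (gradient F) θ v⟫ ≤ L * ‖v‖ ^ 2)
    (θh θm θt : ℕ → EuclideanSpace ℝ (Fin p))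
    (hupd : ∀ t ≥ 1, θt t = θt (t - 1) -
      α • (gradient F (θh (t - 1)) +
        fderiv ℝ (gradient F) (θh (t - 1)) (θt (t - 1) - θh (t - 1))))
    (hupd2 : ∀ t ≥ 1, θm t = θm (t - 1) - α • gradient F (θm (t - 1))) :
    ∀ t ≥ 1, ∃ θ' ∈ segment ℝ (θh (t - 1)) (θm (t - 1)),
      ‖θm t - θt t‖ ≤ (1 - α * m) * ‖θm (t - 1) - θt (t - 1)‖ +
        α * ‖(fderiv ℝ (gradient F) θ' - fderiv ℝ (gradient F) (θh (t - 1)))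
              (θm (t - 1) - θh (t - 1))‖ := by
  intro t ht
  set a := θh (t - 1)
  set b := θm (t - 1)
  set H := fderiv ℝ (gradient F) a
  obtain ⟨θ', hθ', htaylor⟩ := exists_mem_segment_norm_sub_sub_fderiv_le (a := a) (b := b)
    fun x _ => (hF.differentiable_gradient x).hasFDerivAt
  refine ⟨θ', hθ', ?_⟩
  have hL : 0 < L := by
    by_contra! hL
    linarith [one_div_nonpos.2 hL]
  have hαL' : α * L ≤ 1 := (le_div_iff₀ hL).1 hαL
  have hcontr := H.norm_sub_smul_apply_le (hF.isSymmetric_fderiv_gradient a) (hH a) hα.le hαL'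
    (b - θt (t - 1))
  have herror : θm t - θt t = ((b - θt (t - 1)) - α • H (b - θt (t - 1))) -
      α • (gradient F b - gradient F a - H (b - a)) := by
    rw [hupd t ht, hupd2 t ht]
    simp only [map_sub]
    module
  calc ‖θm t - θt t‖
      ≤ ‖(b - θt (t - 1)) - α • H (b - θt (t - 1))‖ +
          α * ‖gradient F b - gradient F a - H (b - a)‖ := by
        rw [herror]
        refine (norm_sub_le _ _).trans_eq ?_
        rw [norm_smul, Real.norm_of_nonneg hα.le]
    _ ≤ _ := add_le_add hcontr (mul_le_mul_of_nonneg_left htaylor hα.le)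

/-- One-step error contraction for the IACV linearized update versus
the true leave-one-out gradient descent update. -/
theorem stmt2 {p : ℕ} (F : EuclideanSpace ℝ (Fin p) → ℝ) (m L α : ℝ)
    (hF : ContDiff ℝ 2 F) (hm : 0 < m) (hmL : m ≤ L)
    (hα : 0 < α) (hαL : α ≤ 1 / L)
    (hH : ∀ θ v, m * ‖v‖ ^ 2 ≤ ⟪v, fderiv ℝ (gradient F) θ v⟫ ∧
          ⟪v, fderiv ℝ (gradient F) θ v⟫ ≤ L * ‖v‖ ^ 2)
    (θh θm θt : ℕ → EuclideanSpace ℝ (Fin p))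
    (hupd : ∀ t ≥ 1, θt t = θt (t - 1) -
      α • (gradient F (θh (t - 1)) +
        fderiv ℝ (gradient F) (θh (t - 1)) (θt (t - 1) - θh (t - 1))))
    (hupd2 : ∀ t ≥ 1, θm t = θm (t - 1) - α • gradient F (θm (t - 1))) :
    ∀ t ≥ 1, ∃ θ' ∈ segment ℝ (θh (t - 1)) (θm (t - 1)),
      ‖θm t - θt t‖ ≤ (1 - α * m) * ‖θm (t - 1) - θt (t - 1)‖ +
        α * ‖(fderiv ℝ (gradient F) θ' - fderiv ℝ (gradient F) (θh (t - 1)))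
              (θm (t - 1) - θh (t - 1))‖ :=
  stmt2_general F m L α hF hα hαL hH θh θm θt hupd hupd2
end

section
/- Let $(x_t)$ and $(y_t)$ be sequences of nonnegative reals with $x_0 = y_0 = 0$, and suppose there are constants $c, a, b > 0$ with $c \le 1$ such that for all $t \ge 1$: $x_t \le (1-c)x_{t-1} + a + b x_{t-1}^2$ and $y_t \le (1-c)y_{t-1} + b x_{t-1}^2$. If $X > 0$ satisfies $a + bX^2 \le cX$ and additionally $bX \le c/2$, then $x_t \le X$ for all $t$ and $y_t \le \frac{bX^2}{c}$ for all $t$. -/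
/-- Invariant-region lemma: a self-consistent threshold `X` bounds the base
recursion, and the coupled linearization-error recursion is bounded by `bX²/c`. -/
theorem stmt12 (x y : ℕ → ℝ) (a b c X : ℝ)
    (ha : 0 < a) (hb : 0 < b) (hc : 0 < c) (hc1 : c ≤ 1) (hX : 0 < X)
    (hXcond : a + b * X ^ 2 ≤ c * X) (hbX : b * X ≤ c / 2)
    (hx0 : x 0 = 0) (hy0 : y 0 = 0)
    (hxnn : ∀ t, 0 ≤ x t) (hynn : ∀ t, 0 ≤ y t)
    (hxrec : ∀ t ≥ 1, x t ≤ (1 - c) * x (t - 1) + a + b * (x (t - 1)) ^ 2)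
    (hyrec : ∀ t ≥ 1, y t ≤ (1 - c) * y (t - 1) + b * (x (t - 1)) ^ 2) :
    (∀ t, x t ≤ X) ∧ (∀ t, y t ≤ b * X ^ 2 / c) := by
  have hxX : ∀ t, x t ≤ X := by
    intro t
    induction t with
    | zero => simp [hx0]; exact hX.le
    | succ n ih =>
      have h := hxrec (n + 1) (by omega)
      simp only [Nat.add_sub_cancel] at h
      have hsq : (x n) ^ 2 ≤ X ^ 2 := by
        have := hxnn n
        nlinarith
      have h1 : (1 - c) * x n ≤ (1 - c) * X :=
        mul_le_mul_of_nonneg_left ih (by linarith)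
      nlinarith
  refine ⟨hxX, ?_⟩
  intro t
  induction t with
  | zero =>
    simp [hy0]
    positivity
  | succ n ih =>
    have h := hyrec (n + 1) (by omega)
    simp only [Nat.add_sub_cancel] at h
    have hsq : (x n) ^ 2 ≤ X ^ 2 := by
      have := hxnn n; have := hxX n; nlinarith
    have h1 : (1 - c) * y n ≤ (1 - c) * (b * X ^ 2 / c) :=
      mul_le_mul_of_nonneg_left ih (by linarith)
    have : (1 - c) * (b * X ^ 2 / c) + b * X ^ 2 = b * X ^ 2 / c := by
      field_simp; ring
    nlinarith
end
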